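/- (Optimal isotropy group of Case 7) Let u₀ ∈ ℝ³, u₀ ≠ 0, and let S = J⁻¹(0,u₀) ∩ M_{G⁴}. Then an element (A,a) ∈ SE(3) satisfies (A,a)·S = S if and only if Au₀ = u₀ and a = ξu₀ for some ξ ∈ ℝ. Moreover this group acts freely on S. -/

import Mathlib

/-!
The momentum map is equivariant in the form
`J ((A,a)·m) = (A L + a × A P, A P)` for `J m = (L, P)`, so on the level set `J = (0, u₀)`
the element `(A,a)` changes the value of `J` to `(a × A u₀, A u₀)`. Since `(A,a)` conjugates
isotropy groups, it preserves trivial isotropy, hence it maps `S` into itself exactly when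
`A u₀ = u₀` and `a × u₀ = 0`, provided `S` is nonempty. A witness is `(0, 0, v, u₀ - v)`
with `v` independent of `u₀`: a rotation fixing it fixes `v`, `u₀`, hence `v × u₀`, so it is
the identity.
-/

open Matrix

/-- Vectors in ℝ³. -/
abbrev V3 : Type := Fin 3 → ℝ

/-- The two-body phase space M = ℝ³ × ℝ³ × ℝ³ × ℝ³, points (q¹, q², p¹, p²). -/
abbrev M2B : Type := V3 × V3 × V3 × V3

/-- A 3×3 real matrix is special orthogonal. -/
def SO3 (A : Matrix (Fin 3) (Fin 3) ℝ) : Prop := Aᵀ * A = 1 ∧ A.det = 1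

/-- The action of (A, a) ∈ SE(3) on the phase space:
(A,a)·(q¹,q²,p¹,p²) = (Aq¹+a, Aq²+a, Ap¹, Ap²). -/
def act (A : Matrix (Fin 3) (Fin 3) ℝ) (a : V3) (m : M2B) : M2B :=
  (A *ᵥ m.1 + a, A *ᵥ m.2.1 + a, A *ᵥ m.2.2.1, A *ᵥ m.2.2.2)

/-- The isotropy subgroup SE(3)_{(q,p)} of a point of M, as a set of pairs (A,a)
with A special orthogonal. -/
def isotropy (m : M2B) : Set (Matrix (Fin 3) (Fin 3) ℝ × V3) :=
  {g | SO3 g.1 ∧ act g.1 g.2 m = m}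

/-- The momentum map J(q¹,q²,p¹,p²) = (q¹×p¹ + q²×p², p¹+p²). -/
def Jmom (m : M2B) : V3 × V3 :=
  (m.1 ⨯₃ m.2.2.1 + m.2.1 ⨯₃ m.2.2.2, m.2.2.1 + m.2.2.2)

/-- G¹(x) = {(A,a) ∈ SE(3) : a = x − Ax}. -/
def G1 (x : V3) : Set (Matrix (Fin 3) (Fin 3) ℝ × V3) :=
  {g | SO3 g.1 ∧ g.2 = x - g.1 *ᵥ x}

/-- G²(y) = {(A,0) ∈ SE(3) : Ay = y}. -/
def G2 (y : V3) : Set (Matrix (Fin 3) (Fin 3) ℝ × V3) :=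
  {g | SO3 g.1 ∧ g.1 *ᵥ y = y ∧ g.2 = 0}

/-- G³(x,y) = {(A,a) ∈ SE(3) : Ay = y and a = x − Ax}. -/
def G3 (x y : V3) : Set (Matrix (Fin 3) (Fin 3) ℝ × V3) :=
  {g | SO3 g.1 ∧ g.1 *ᵥ y = y ∧ g.2 = x - g.1 *ᵥ x}

/-- G⁴ = {(I, 0)}, the trivial subgroup. -/
def G4 : Set (Matrix (Fin 3) (Fin 3) ℝ × V3) := {((1 : Matrix (Fin 3) (Fin 3) ℝ), (0 : V3))}

theorem transpose_mulVec_cross_mulVec {R : Type*} [CommRing R] (A : Matrix (Fin 3) (Fin 3) R)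
    (x y : Fin 3 → R) : Aᵀ *ᵥ ((A *ᵥ x) ⨯₃ (A *ᵥ y)) = A.det • (x ⨯₃ y) := by
  funext i
  fin_cases i <;>
  · simp only [mulVec, dotProduct, Fin.zero_eta, Fin.mk_one, Fin.reduceFinMk, Fin.isValue,
      transpose_apply, cross_apply, Fin.sum_univ_three, cons_val_zero, cons_val_one, cons_val,
      det_fin_three, Pi.smul_apply, smul_eq_mul]
    ring

theorem cross_eq_zero_iff_exists_smul {F : Type*} [Field F] {u a : Fin 3 → F} (hu : u ≠ 0) :
    a ⨯₃ u = 0 ↔ ∃ ξ : F, a = ξ • u := by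
  rw [← cross_anticomm, neg_eq_zero, ← not_ne_iff, crossProduct_ne_zero_iff_linearIndependent,
    LinearIndependent.pair_iff' hu]
  simp only [not_forall, not_not, eq_comm]

namespace SO3

variable {A B : Matrix (Fin 3) (Fin 3) ℝ}

theorem mul_transpose (hA : SO3 A) : A * Aᵀ = 1 := mul_eq_one_comm.mp hA.1

theorem one : SO3 1 := ⟨by simp, det_one⟩

theorem transpose (hA : SO3 A) : SO3 Aᵀ :=
  ⟨by rw [transpose_transpose, hA.mul_transpose], by rw [det_transpose, hA.2]⟩

theorem mul (hA : SO3 A) (hB : SO3 B) : SO3 (A * B) := by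
  refine ⟨?_, by rw [det_mul, hA.2, hB.2, one_mul]⟩
  rw [transpose_mul, Matrix.mul_assoc, ← Matrix.mul_assoc Aᵀ, hA.1, Matrix.one_mul, hB.1]

theorem transpose_mulVec_mulVec (hA : SO3 A) (x : V3) : Aᵀ *ᵥ (A *ᵥ x) = x := by
  rw [mulVec_mulVec, hA.1, one_mulVec]

theorem mulVec_transpose_mulVec (hA : SO3 A) (x : V3) : A *ᵥ (Aᵀ *ᵥ x) = x := by
  rw [mulVec_mulVec, hA.mul_transpose, one_mulVec]

theorem mulVec_cross (hA : SO3 A) (x y : V3) : (A *ᵥ x) ⨯₃ (A *ᵥ y) = A *ᵥ (x ⨯₃ y) := by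
  rw [← hA.mulVec_transpose_mulVec ((A *ᵥ x) ⨯₃ (A *ᵥ y)), transpose_mulVec_cross_mulVec, hA.2,
    one_smul]

theorem eq_one_of_mulVec_eq_self (hB : SO3 B) {u v : V3} (hu : B *ᵥ u = u) (hv : B *ᵥ v = v)
    (huv : LinearIndependent ℝ ![u, v]) : B = 1 := by
  set n := u ⨯₃ v
  have hn : B *ᵥ n = n := by rw [← hB.mulVec_cross, hu, hv]
  have hdet : det ![u, v, n] ≠ 0 := by
    rw [← triple_product_eq_det, triple_product_permutation, triple_product_permutation, Ne,
      dotProduct_self_eq_zero]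
    exact crossProduct_ne_zero_iff_linearIndependent.mpr huv
  have hspan : Submodule.span ℝ (Set.range ![u, v, n]) = ⊤ :=
    (linearIndependent_rows_of_det_ne_zero hdet).span_eq_top_of_card_eq_finrank (by simp)
  refine toLin'.injective ((LinearMap.ext_on_range hspan fun i => ?_).trans toLin'_one.symm)
  fin_cases i <;> simp [hu, hv, hn]

end SO3

theorem act_act (A B : Matrix (Fin 3) (Fin 3) ℝ) (a b : V3) (m : M2B) :
    act A a (act B b m) = act (A * B) (A *ᵥ b + a) m := by
  simp [act, mulVec_add, mulVec_mulVec, add_assoc]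

theorem act_one_zero (m : M2B) : act 1 0 m = m := by
  simp [act]

section Action

variable {A : Matrix (Fin 3) (Fin 3) ℝ} {a u : V3}

theorem act_transpose_act (hA : SO3 A) (m : M2B) : act Aᵀ (-(Aᵀ *ᵥ a)) (act A a m) = m := by
  rw [act_act, hA.1, add_neg_cancel, act_one_zero]

theorem act_act_transpose (hA : SO3 A) (m : M2B) : act A a (act Aᵀ (-(Aᵀ *ᵥ a)) m) = m := by
  rw [act_act, hA.mul_transpose, mulVec_neg, hA.mulVec_transpose_mulVec, neg_add_cancel,
    act_one_zero]

theorem Jmom_act (hA : SO3 A) (m : M2B) :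
    Jmom (act A a m) = (A *ᵥ (Jmom m).1 + a ⨯₃ (A *ᵥ (Jmom m).2), A *ᵥ (Jmom m).2) := by
  obtain ⟨q₁, q₂, p₁, p₂⟩ := m
  simp only [Jmom, act, map_add, LinearMap.add_apply, hA.mulVec_cross, mulVec_add]
  congr 1
  abel

theorem isotropy_eq_G4_iff {m : M2B} :
    isotropy m = G4 ↔ ∀ B b, SO3 B → act B b m = m → B = 1 ∧ b = 0 := by
  have hG4 : G4 ⊆ isotropy m := by
    rintro _ rfl
    exact ⟨SO3.one, act_one_zero m⟩
  refine ⟨fun h B b hB hfix => ?_, fun h => hG4.antisymm' fun g hg => ?_⟩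
  · have hmem : (B, b) ∈ isotropy m := ⟨hB, hfix⟩
    rw [h] at hmem
    exact Prod.mk.inj hmem
  · exact Prod.ext_iff.mpr (h g.1 g.2 hg.1 hg.2)

theorem isotropy_act_eq_G4 (hA : SO3 A) {m : M2B} (hm : isotropy m = G4) :
    isotropy (act A a m) = G4 := by
  refine isotropy_eq_G4_iff.mpr fun B b hB hfix => ?_
  have hconj : act (Aᵀ * (B * A)) (Aᵀ *ᵥ (B *ᵥ a + b) + -(Aᵀ *ᵥ a)) m = m := by
    rw [← act_act, ← act_act, hfix, act_transpose_act hA]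
  obtain ⟨hC, hc⟩ := isotropy_eq_G4_iff.mp hm _ _ (hA.transpose.mul (hB.mul hA)) hconj
  have hB1 : B = 1 := calc
    B = A * (Aᵀ * (B * A)) * Aᵀ := by
      simp only [← Matrix.mul_assoc, hA.mul_transpose, Matrix.one_mul]
      rw [Matrix.mul_assoc, hA.mul_transpose, Matrix.mul_one]
    _ = 1 := by rw [hC, Matrix.mul_one, hA.mul_transpose]
  refine ⟨hB1, ?_⟩
  rw [hB1, one_mulVec, mulVec_add, add_neg_cancel_comm] at hc
  rw [← hA.mulVec_transpose_mulVec b, hc, mulVec_zero]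

def freeLevelSet (u : V3) : Set M2B := {m | Jmom m = (0, u) ∧ isotropy m = G4}

theorem freeLevelSet_nonempty (hu : u ≠ 0) : (freeLevelSet u).Nonempty := by
  obtain ⟨v, huv⟩ :=
    exists_linearIndependent_pair_of_one_lt_finrank (by simp : 1 < Module.finrank ℝ V3) hu
  refine ⟨(0, 0, v, u - v), by simp [Jmom], isotropy_eq_G4_iff.mpr fun B b hB hfix => ?_⟩
  simp only [act, Prod.mk.injEq, mulVec_zero, zero_add] at hfix
  obtain ⟨rfl, -, hBv, hBw⟩ := hfix
  rw [mulVec_sub, hBv, sub_left_inj] at hBw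
  exact ⟨hB.eq_one_of_mulVec_eq_self hBw hBv huv, rfl⟩

theorem act_mem_freeLevelSet (hA : SO3 A) (hAu : A *ᵥ u = u) (hau : a ⨯₃ u = 0) {m : M2B}
    (hm : m ∈ freeLevelSet u) :
    act A a m ∈ freeLevelSet u := by
  refine ⟨?_, isotropy_act_eq_G4 hA hm.2⟩
  rw [Jmom_act hA, hm.1, hAu, hau, mulVec_zero, add_zero]

theorem image_act_freeLevelSet (hA : SO3 A) (hAu : A *ᵥ u = u) (hau : a ⨯₃ u = 0) :
    act A a '' freeLevelSet u = freeLevelSet u := by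
  have hAtu : Aᵀ *ᵥ u = u := by simpa [hAu] using hA.transpose_mulVec_mulVec u
  have hau' : -(Aᵀ *ᵥ a) ⨯₃ u = 0 := by
    rw [map_neg, LinearMap.neg_apply, neg_eq_zero]
    conv_lhs => rw [← hAtu]
    rw [hA.transpose.mulVec_cross, hau, mulVec_zero]
  apply Set.Subset.antisymm
  · rintro _ ⟨m, hm, rfl⟩
    exact act_mem_freeLevelSet hA hAu hau hm
  · intro m hm
    exact ⟨_, act_mem_freeLevelSet hA.transpose hAtu hau' hm, act_act_transpose hA m⟩

theorem mulVec_eq_self_and_cross_eq_zero_of_image_act (hA : SO3 A) (hu : u ≠ 0)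
    (h : act A a '' freeLevelSet u = freeLevelSet u) :
    A *ᵥ u = u ∧ a ⨯₃ u = 0 := by
  obtain ⟨m, hm⟩ := freeLevelSet_nonempty hu
  have hJ := (h ▸ Set.mem_image_of_mem (act A a) hm : act A a m ∈ freeLevelSet u).1
  simp only [Jmom_act hA, hm.1, mulVec_zero, zero_add, Prod.mk.injEq] at hJ
  obtain ⟨hau, hAu⟩ := hJ
  rw [hAu] at hau
  exact ⟨hAu, hau⟩

end Action

/-- Optimal isotropy group of Case 7: (A,a) preserves S = J⁻¹(0,u₀) ∩ M_{G⁴} iff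
Au₀ = u₀ and a = ξu₀; moreover this group acts freely on S. -/
theorem stmt16 (u0 : V3) (hu : u0 ≠ 0) :
    (∀ (A : Matrix (Fin 3) (Fin 3) ℝ) (a : V3), SO3 A →
      (act A a '' {m : M2B | Jmom m = (0, u0) ∧ isotropy m = G4} =
          {m : M2B | Jmom m = (0, u0) ∧ isotropy m = G4} ↔
        (A *ᵥ u0 = u0 ∧ ∃ ξ : ℝ, a = ξ • u0))) ∧
    ∀ (A : Matrix (Fin 3) (Fin 3) ℝ) (a : V3), SO3 A → A *ᵥ u0 = u0 →
      (∃ ξ : ℝ, a = ξ • u0) →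
      ∀ m ∈ {m : M2B | Jmom m = (0, u0) ∧ isotropy m = G4},
        act A a m = m → A = 1 ∧ a = 0 := by
  refine ⟨fun A a hA => ?_, fun A a hA _ _ m hm hfix => isotropy_eq_G4_iff.mp hm.2 A a hA hfix⟩
  rw [← cross_eq_zero_iff_exists_smul hu]
  exact ⟨mulVec_eq_self_and_cross_eq_zero_of_image_act hA hu,
    fun h => image_act_freeLevelSet hA h.1 h.2⟩
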